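/- For any positive integers n ≥ k ≥ 1, the central factorial number of even indices U(n,k) equals the number of ordered pairs (Q₁, Q₂) of supdiagonal k-quasi-permutations of [n] such that pr_y(Q₁) = pr_y(Q₂). -/
import Mathlib


open Polynomial

/-- The central factorial numbers of even indices `U n k = T (2n) (2k)`. -/
def U : ℕ → ℕ → ℕ
  | 0, 0 => 1
  | 0, _ + 1 => 0
  | _ + 1, 0 => 0
  | n + 1, k + 1 => U n k + (k + 1) ^ 2 * U n (k + 1)

/-- The supdiagonal part `Q⁺` of `Q ⊆ [n] × [n]`. -/
def Qsup {n : ℕ} (Q : Finset (Fin n × Fin n)) : Finset (Fin n × Fin n) :=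
  Q.filter fun p => p.1 ≤ p.2

/-- The subdiagonal part `Q⁻` of `Q ⊆ [n] × [n]`. -/
def Qsub {n : ℕ} (Q : Finset (Fin n × Fin n)) : Finset (Fin n × Fin n) :=
  Q.filter fun p => p.2 ≤ p.1

/-- The projection `pr_x` on the first coordinates. -/
def prX {n : ℕ} (Q : Finset (Fin n × Fin n)) : Finset (Fin n) := Q.image Prod.fst

/-- The projection `pr_y` on the second coordinates. -/
def prY {n : ℕ} (Q : Finset (Fin n × Fin n)) : Finset (Fin n) := Q.image Prod.snd

/-- `Q` is a simply hooked `k`-quasi-permutation of `[n]`: it is contained in the diagram of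
some permutation of `[n]`, has `n - k` elements, and `pr_x(Q⁻) ∩ pr_y(Q⁺) = ∅`. -/
def IsSHQP (n k : ℕ) (Q : Finset (Fin n × Fin n)) : Prop :=
  (∃ σ : Equiv.Perm (Fin n), ∀ p ∈ Q, σ p.1 = p.2) ∧
  Q.card = n - k ∧
  prX (Qsub Q) ∩ prY (Qsup Q) = ∅

open Finset

/-! ### Auxiliary development -/

def struct {n : ℕ} (Q : Finset (Fin n × Fin n)) : Prop :=
  (∀ p ∈ Q, p.1 < p.2) ∧
  (∀ p ∈ Q, ∀ q ∈ Q, p.1 = q.1 → p = q) ∧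
  (∀ p ∈ Q, ∀ q ∈ Q, p.2 = q.2 → p = q)

instance structDec {n : ℕ} (Q : Finset (Fin n × Fin n)) : Decidable (struct Q) :=
  @instDecidableAnd _ _ inferInstance (@instDecidableAnd _ _ inferInstance inferInstance)

def okP (n k : ℕ) (Q : Finset (Fin n × Fin n)) : Prop := Q.card = n - k ∧ struct Q

instance okPDec (n k : ℕ) (Q : Finset (Fin n × Fin n)) : Decidable (okP n k Q) :=
  @instDecidableAnd _ _ inferInstance inferInstance

theorem exists_perm_ext {n : ℕ} (Q : Finset (Fin n × Fin n))
    (h1 : ∀ p ∈ Q, ∀ q ∈ Q, p.1 = q.1 → p = q)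
    (h2 : ∀ p ∈ Q, ∀ q ∈ Q, p.2 = q.2 → p = q) :
    ∃ σ : Equiv.Perm (Fin n), ∀ p ∈ Q, σ p.1 = p.2 := by
  classical
  induction Q using Finset.induction_on with
  | empty => exact ⟨1, by simp⟩
  | @insert p Q' hp ih =>
    obtain ⟨σ', hσ'⟩ := ih
      (fun a ha b hb hab => h1 a (mem_insert_of_mem ha) b (mem_insert_of_mem hb) hab)
      (fun a ha b hb hab => h2 a (mem_insert_of_mem ha) b (mem_insert_of_mem hb) hab)
    refine ⟨σ'.trans (Equiv.swap (σ' p.1) p.2), ?_⟩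
    intro q hq
    rcases mem_insert.mp hq with rfl | hq'
    · simp [Equiv.swap_apply_left]
    · have hq2ne : q.2 ≠ p.2 := by
        intro h
        exact hp (h2 q (mem_insert_of_mem hq') p (mem_insert_self p Q') h ▸ hq')
      have hq2ne' : q.2 ≠ σ' p.1 := by
        intro h
        have heq := hσ' q hq'
        have h1' : σ' q.1 = σ' p.1 := heq.trans h
        have : q.1 = p.1 := σ'.injective h1'
        have := h1 q (mem_insert_of_mem hq') p (mem_insert_self p Q') this
        exact hp (this ▸ hq')
      simp only [Equiv.trans_apply, hσ' q hq']
      exact Equiv.swap_apply_of_ne_of_ne hq2ne' hq2ne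

theorem isSHQP_iff {n k : ℕ} (Q : Finset (Fin n × Fin n)) :
    (IsSHQP n k Q ∧ Qsub Q = ∅) ↔ okP n k Q := by
  constructor
  · rintro ⟨⟨⟨σ, hσ⟩, hcard, -⟩, hsub⟩
    refine ⟨hcard, ?_, ?_, ?_⟩
    · intro p hp
      rcases lt_or_ge p.1 p.2 with h | h
      · exact h
      · exact absurd (Finset.mem_filter.mpr ⟨hp, h⟩ : p ∈ Q.filter fun p => p.2 ≤ p.1) (by rw [show (filter (fun p => p.2 ≤ p.1) Q : Finset _) = ∅ from hsub]; exact notMem_empty p)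
    · intro p hp q hq h
      have : p.2 = q.2 := by rw [← hσ p hp, ← hσ q hq, h]
      exact Prod.ext h this
    · intro p hp q hq h
      have : p.1 = q.1 := σ.injective (by rw [hσ p hp, hσ q hq, h])
      exact Prod.ext this h
  · rintro ⟨hcard, hlt, h1, h2⟩
    have hsub : Qsub Q = ∅ := by
      rw [Qsub, Finset.filter_eq_empty_iff]
      intro p hp
      exact not_le.mpr (hlt p hp)
    refine ⟨⟨exists_perm_ext Q h1 h2, hcard, ?_⟩, hsub⟩
    rw [hsub]
    simp [prX]

def G (n k : ℕ) : Finset (Finset (Fin n × Fin n) × Finset (Fin n × Fin n)) :=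
  Finset.univ.filter fun QQ => okP n k QQ.1 ∧ okP n k QQ.2 ∧ prY QQ.1 = prY QQ.2

lemma mem_G {n k : ℕ} {QQ : Finset (Fin n × Fin n) × Finset (Fin n × Fin n)} :
    QQ ∈ G n k ↔ okP n k QQ.1 ∧ okP n k QQ.2 ∧ prY QQ.1 = prY QQ.2 := by
  simp [G]

theorem natCard_eq_G (n k : ℕ) :
    Nat.card {QQ : Finset (Fin n × Fin n) × Finset (Fin n × Fin n) //
      IsSHQP n k QQ.1 ∧ IsSHQP n k QQ.2 ∧ Qsub QQ.1 = ∅ ∧ Qsub QQ.2 = ∅ ∧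
      prY QQ.1 = prY QQ.2} = (G n k).card := by
  classical
  rw [Nat.card_eq_fintype_card]
  rw [Fintype.card_congr (Equiv.subtypeEquivRight (q := fun QQ =>
      okP n k QQ.1 ∧ okP n k QQ.2 ∧ prY QQ.1 = prY QQ.2) ?_)]
  · rw [G]
    convert Fintype.card_subtype _
  · intro QQ
    rw [← isSHQP_iff, ← isSHQP_iff]
    tauto


def embP (n : ℕ) : Fin n × Fin n ↪ Fin (n+1) × Fin (n+1) :=
  Fin.castSuccEmb.prodMap Fin.castSuccEmb

@[simp] lemma embP_apply {n : ℕ} (p : Fin n × Fin n) :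
    embP n p = (p.1.castSucc, p.2.castSucc) := rfl

lemma prY_map {n : ℕ} (Q : Finset (Fin n × Fin n)) :
    prY (Q.map (embP n)) = (prY Q).map Fin.castSuccEmb := by
  simp only [prY, Finset.map_eq_image, Finset.image_image]
  rfl

lemma prX_map {n : ℕ} (Q : Finset (Fin n × Fin n)) :
    prX (Q.map (embP n)) = (prX Q).map Fin.castSuccEmb := by
  simp only [prX, Finset.map_eq_image, Finset.image_image]
  rfl

lemma struct_map_iff {n : ℕ} (Q : Finset (Fin n × Fin n)) :
    struct (Q.map (embP n)) ↔ struct Q := by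
  constructor
  · rintro ⟨hlt, h1, h2⟩
    refine ⟨?_, ?_, ?_⟩
    · intro p hp
      have := hlt (embP n p) (mem_map_of_mem _ hp)
      simpa [Fin.castSucc_lt_castSucc_iff] using this
    · intro p hp q hq h
      have := h1 (embP n p) (mem_map_of_mem _ hp) (embP n q) (mem_map_of_mem _ hq)
        (by simp [h])
      exact (embP n).injective this
    · intro p hp q hq h
      have := h2 (embP n p) (mem_map_of_mem _ hp) (embP n q) (mem_map_of_mem _ hq)
        (by simp [h])
      exact (embP n).injective this
  · rintro ⟨hlt, h1, h2⟩
    refine ⟨?_, ?_, ?_⟩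
    · intro p hp
      obtain ⟨q, hq, rfl⟩ := mem_map.mp hp
      simpa [Fin.castSucc_lt_castSucc_iff] using hlt q hq
    · intro p hp q hq h
      obtain ⟨p', hp', rfl⟩ := mem_map.mp hp
      obtain ⟨q', hq', rfl⟩ := mem_map.mp hq
      have : p'.1 = q'.1 := Fin.castSucc_injective n (by simpa using h)
      rw [h1 p' hp' q' hq' this]
    · intro p hp q hq h
      obtain ⟨p', hp', rfl⟩ := mem_map.mp hp
      obtain ⟨q', hq', rfl⟩ := mem_map.mp hq
      have : p'.2 = q'.2 := Fin.castSucc_injective n (by simpa using h)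
      rw [h2 p' hp' q' hq' this]

lemma subset_range_embP {n : ℕ} (Q : Finset (Fin (n+1) × Fin (n+1)))
    (hlt : ∀ p ∈ Q, p.1 < p.2) (hlast : Fin.last n ∉ prY Q) :
    ∃ u : Finset (Fin n × Fin n), Q = u.map (embP n) := by
  have hsub : Q ⊆ (Finset.univ : Finset (Fin n × Fin n)).map (embP n) := by
    intro p hp
    have h2 : p.2 ≠ Fin.last n := fun h => hlast (by
      simpa [prY, h] using Finset.mem_image_of_mem Prod.snd hp)
    have h2' : p.2 < Fin.last n := Fin.lt_last_iff_ne_last.mpr h2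
    have h1' : p.1 < Fin.last n := (hlt p hp).trans h2'
    refine Finset.mem_map.mpr ⟨(⟨p.1.val, h1'⟩, ⟨p.2.val, h2'⟩), Finset.mem_univ _, ?_⟩
    simp [embP_apply, Fin.ext_iff, Fin.castSucc]
  obtain ⟨u, -, hu⟩ := Finset.subset_map_iff.mp hsub
  exact ⟨u, hu⟩

lemma cardA (n k : ℕ) :
    ((G (n+1) (k+1)).filter fun QQ => Fin.last n ∉ prY QQ.1).card = (G n k).card := by
  rw [eq_comm]
  apply Finset.card_bij (fun QQ _ => (QQ.1.map (embP n), QQ.2.map (embP n)))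
  · intro QQ hQQ
    obtain ⟨⟨hc1, hs1⟩, ⟨hc2, hs2⟩, hpr⟩ := mem_G.mp hQQ
    have hlast : Fin.last n ∉ prY (QQ.1.map (embP n)) := by
      rw [prY_map]
      intro h
      obtain ⟨b, -, hb⟩ := Finset.mem_map.mp h
      exact (Fin.castSucc_lt_last b).ne hb
    refine Finset.mem_filter.mpr ⟨mem_G.mpr ⟨⟨?_, ?_⟩, ⟨?_, ?_⟩, ?_⟩, hlast⟩
    · rw [Finset.card_map, hc1, Nat.succ_sub_succ]
    · exact (struct_map_iff _).mpr hs1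
    · rw [Finset.card_map, hc2, Nat.succ_sub_succ]
    · exact (struct_map_iff _).mpr hs2
    · rw [prY_map, prY_map, hpr]
  · intro QQ1 h1 QQ2 h2 h
    have e1 := congrArg Prod.fst h
    have e2 := congrArg Prod.snd h
    simp only at e1 e2
    exact Prod.ext (Finset.map_injective _ e1) (Finset.map_injective _ e2)
  · intro QQ hQQ
    obtain ⟨hG, hlast⟩ := Finset.mem_filter.mp hQQ
    obtain ⟨⟨hc1, hs1⟩, ⟨hc2, hs2⟩, hpr⟩ := mem_G.mp hG
    have hlast2 : Fin.last n ∉ prY QQ.2 := hpr ▸ hlast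
    obtain ⟨u1, hu1⟩ := subset_range_embP QQ.1 hs1.1 hlast
    obtain ⟨u2, hu2⟩ := subset_range_embP QQ.2 hs2.1 hlast2
    refine ⟨(u1, u2), ?_, ?_⟩
    · refine mem_G.mpr ⟨⟨?_, ?_⟩, ⟨?_, ?_⟩, ?_⟩
      · have := hc1; rw [hu1, Finset.card_map] at this; rwa [Nat.succ_sub_succ] at this
      · exact (struct_map_iff _).mp (hu1 ▸ hs1)
      · have := hc2; rw [hu2, Finset.card_map] at this; rwa [Nat.succ_sub_succ] at this
      · exact (struct_map_iff _).mp (hu2 ▸ hs2)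
      · apply Finset.map_injective Fin.castSuccEmb
        rw [← prY_map, ← prY_map, ← hu1, ← hu2, hpr]
    · simp only
      rw [← hu1, ← hu2]

lemma struct_subset {n : ℕ} {Q Q' : Finset (Fin n × Fin n)} (h : Q' ⊆ Q) (hs : struct Q) :
    struct Q' :=
  ⟨fun p hp => hs.1 p (h hp), fun p hp q hq => hs.2.1 p (h hp) q (h hq),
   fun p hp q hq => hs.2.2 p (h hp) q (h hq)⟩

lemma prY_insert {n : ℕ} (p : Fin n × Fin n) (Q : Finset (Fin n × Fin n)) :
    prY (insert p Q) = insert p.2 (prY Q) := Finset.image_insert _ _ _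

lemma prY_filter_ne_last {n : ℕ} (Q : Finset (Fin (n+1) × Fin (n+1))) :
    prY (Q.filter fun p => p.2 ≠ Fin.last n) = (prY Q).filter (· ≠ Fin.last n) := by
  ext y
  simp only [prY, Finset.mem_image, Finset.mem_filter]
  constructor
  · rintro ⟨p, ⟨hp, h2⟩, rfl⟩
    exact ⟨⟨p, hp, rfl⟩, h2⟩
  · rintro ⟨⟨p, hp, rfl⟩, hy⟩
    exact ⟨p, ⟨hp, hy⟩, rfl⟩

noncomputable def down {n : ℕ} (Q : Finset (Fin (n+1) × Fin (n+1))) : Finset (Fin n × Fin n) :=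
  (Q.filter fun p => p.2 ≠ Fin.last n).preimage (embP n) ((embP n).injective.injOn)

lemma down_map {n : ℕ} (Q : Finset (Fin (n+1) × Fin (n+1)))
    (hlt : ∀ p ∈ Q, p.1 < p.2) :
    (down Q).map (embP n) = Q.filter fun p => p.2 ≠ Fin.last n := by
  obtain ⟨u, hu⟩ := subset_range_embP (Q.filter fun p => p.2 ≠ Fin.last n)
    (fun p hp => hlt p (Finset.mem_filter.mp hp).1)
    (by
      rw [prY_filter_ne_last]
      simp)
  simp only [down, hu, Finset.preimage_map]

lemma down_insert {n : ℕ} (a : Fin (n+1)) (Y : Finset (Fin n × Fin n)) :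
    down (insert (a, Fin.last n) (Y.map (embP n))) = Y := by
  have hfil : ((insert (a, Fin.last n) (Y.map (embP n))).filter
      fun p => p.2 ≠ Fin.last n) = Y.map (embP n) := by
    rw [Finset.filter_insert, if_neg (by simp), Finset.filter_true_of_mem]
    intro p hp
    obtain ⟨q, -, rfl⟩ := Finset.mem_map.mp hp
    exact (Fin.castSucc_lt_last q.2).ne
  simp only [down, hfil, Finset.preimage_map]

/-- structure of a set containing `last` in its second projection -/
lemma decompose_last {n : ℕ} (Q : Finset (Fin (n+1) × Fin (n+1))) (hs : struct Q)
    (h : Fin.last n ∈ prY Q) :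
    ∃ a : Fin (n+1), a < Fin.last n ∧ (a, Fin.last n) ∈ Q ∧
      Q = insert (a, Fin.last n) (Q.filter fun p => p.2 ≠ Fin.last n) := by
  obtain ⟨p, hp, hp2⟩ := Finset.mem_image.mp h
  refine ⟨p.1, ?_, ?_, ?_⟩
  · rw [← hp2]; exact hs.1 p hp
  · rwa [show (p.1, Fin.last n) = p from Prod.ext rfl hp2.symm]
  · ext q
    simp only [Finset.mem_insert, Finset.mem_filter]
    constructor
    · intro hq
      by_cases hq2 : q.2 = Fin.last n
      · left
        have : q = p := hs.2.2 q hq p hp (hq2.trans hp2.symm)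
        rw [this, ← hp2]
      · right; exact ⟨hq, hq2⟩
    · rintro (rfl | ⟨hq, -⟩)
      · rwa [show (p.1, Fin.last n) = p from Prod.ext rfl hp2.symm]
      · exact hq

def Scompl {n : ℕ} (Y : Finset (Fin n × Fin n)) : Finset (Fin (n+1)) :=
  Finset.univ \ insert (Fin.last n) (prX (Y.map (embP n)))

lemma card_prX {n : ℕ} (Y : Finset (Fin n × Fin n)) (hs : struct Y) :
    (prX Y).card = Y.card := by
  rw [prX]
  apply Finset.card_image_of_injOn
  intro p hp q hq h
  exact hs.2.1 p hp q hq h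

lemma card_Scompl {n k : ℕ} (hkn : k + 1 ≤ n) (Y : Finset (Fin n × Fin n))
    (hs : struct Y) (hc : Y.card = n - (k+1)) :
    (Scompl Y).card = k + 1 := by
  have hlast : Fin.last n ∉ prX (Y.map (embP n)) := by
    rw [prX_map]
    intro h
    obtain ⟨b, -, hb⟩ := Finset.mem_map.mp h
    exact (Fin.castSucc_lt_last b).ne hb
  have h1 : (insert (Fin.last n) (prX (Y.map (embP n)))).card = n - (k+1) + 1 := by
    rw [Finset.card_insert_of_notMem hlast, prX_map, Finset.card_map, card_prX Y hs, hc]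
  rw [Scompl, Finset.card_sdiff_of_subset (Finset.subset_univ _), h1, Finset.card_univ,
    Fintype.card_fin]
  omega

lemma struct_insert_last {n : ℕ} (a : Fin (n+1)) (Y : Finset (Fin n × Fin n))
    (hs : struct Y) (ha : a ∈ Scompl Y) :
    struct (insert (a, Fin.last n) (Y.map (embP n))) := by
  have hsm : struct (Y.map (embP n)) := (struct_map_iff Y).mpr hs
  have hane : a ≠ Fin.last n := by
    intro h
    have := Finset.mem_sdiff.mp ha
    exact this.2 (h ▸ Finset.mem_insert_self _ _)
  have hanotin : a ∉ prX (Y.map (embP n)) := by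
    intro h
    exact (Finset.mem_sdiff.mp ha).2 (Finset.mem_insert_of_mem h)
  have hsndne : ∀ q ∈ Y.map (embP n), q.2 ≠ Fin.last n := by
    intro q hq
    obtain ⟨q', -, rfl⟩ := Finset.mem_map.mp hq
    exact (Fin.castSucc_lt_last q'.2).ne
  refine ⟨?_, ?_, ?_⟩
  · intro p hp
    rcases Finset.mem_insert.mp hp with rfl | hp'
    · exact Fin.lt_last_iff_ne_last.mpr hane
    · exact hsm.1 p hp'
  · intro p hp q hq h
    rcases Finset.mem_insert.mp hp with rfl | hp' <;>
      rcases Finset.mem_insert.mp hq with rfl | hq'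
    · rfl
    · exact absurd (Finset.mem_image_of_mem Prod.fst hq' : q.1 ∈ prX _) (h ▸ hanotin)
    · exact absurd (Finset.mem_image_of_mem Prod.fst hp' : p.1 ∈ prX _) (h.symm ▸ hanotin)
    · exact hsm.2.1 p hp' q hq' h
  · intro p hp q hq h
    rcases Finset.mem_insert.mp hp with rfl | hp' <;>
      rcases Finset.mem_insert.mp hq with rfl | hq'
    · rfl
    · exact absurd h.symm (hsndne q hq')
    · exact absurd h (hsndne p hp')
    · exact hsm.2.2 p hp' q hq' h

lemma card_fiber (n k : ℕ) (hkn : k + 1 ≤ n)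
    (YY : Finset (Fin n × Fin n) × Finset (Fin n × Fin n)) (hYY : YY ∈ G n (k+1)) :
    (((G (n+1) (k+1)).filter fun QQ => Fin.last n ∈ prY QQ.1).filter
      fun QQ => (down QQ.1, down QQ.2) = YY).card = (k+1)^2 := by
  obtain ⟨⟨hc1, hs1⟩, ⟨hc2, hs2⟩, hpr⟩ := mem_G.mp hYY
  have hsq : (k+1)^2 = ((Scompl YY.1) ×ˢ (Scompl YY.2)).card := by
    rw [Finset.card_product, card_Scompl hkn YY.1 hs1 hc1, card_Scompl hkn YY.2 hs2 hc2, sq]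
  rw [hsq, eq_comm]
  have hsndne : ∀ (Y : Finset (Fin n × Fin n)), ∀ q ∈ Y.map (embP n), q.2 ≠ Fin.last n := by
    intro Y q hq
    obtain ⟨q', -, rfl⟩ := Finset.mem_map.mp hq
    exact (Fin.castSucc_lt_last q'.2).ne
  apply Finset.card_bij (fun a _ =>
    (insert (a.1, Fin.last n) (YY.1.map (embP n)), insert (a.2, Fin.last n) (YY.2.map (embP n))))
  · -- maps into the fiber
    intro a ha
    obtain ⟨ha1, ha2⟩ := Finset.mem_product.mp ha
    have hnotin1 : (a.1, Fin.last n) ∉ YY.1.map (embP n) := fun h => hsndne _ _ h rfl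
    have hnotin2 : (a.2, Fin.last n) ∉ YY.2.map (embP n) := fun h => hsndne _ _ h rfl
    refine Finset.mem_filter.mpr ⟨Finset.mem_filter.mpr ⟨mem_G.mpr ⟨⟨?_, ?_⟩, ⟨?_, ?_⟩, ?_⟩, ?_⟩, ?_⟩
    · rw [Finset.card_insert_of_notMem hnotin1, Finset.card_map, hc1]
      omega
    · exact struct_insert_last a.1 YY.1 hs1 ha1
    · rw [Finset.card_insert_of_notMem hnotin2, Finset.card_map, hc2]
      omega
    · exact struct_insert_last a.2 YY.2 hs2 ha2
    · simp only [prY_insert, prY_map, hpr]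
    · simp only [prY_insert]
      exact Finset.mem_insert_self _ _
    · simp only [down_insert]
  · -- injective
    intro a ha b hb h
    have h1 := congrArg Prod.fst h
    have h2 := congrArg Prod.snd h
    simp only at h1 h2
    have e1 : a.1 = b.1 := by
      have : (a.1, Fin.last n) ∈ insert (b.1, Fin.last n) (YY.1.map (embP n)) := by
        rw [← h1]; exact Finset.mem_insert_self _ _
      rcases Finset.mem_insert.mp this with h' | h'
      · exact (Prod.ext_iff.mp h').1
      · exact absurd rfl (hsndne _ _ h')
    have e2 : a.2 = b.2 := by
      have : (a.2, Fin.last n) ∈ insert (b.2, Fin.last n) (YY.2.map (embP n)) := by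
        rw [← h2]; exact Finset.mem_insert_self _ _
      rcases Finset.mem_insert.mp this with h' | h'
      · exact (Prod.ext_iff.mp h').1
      · exact absurd rfl (hsndne _ _ h')
    exact Prod.ext e1 e2
  · -- surjective
    intro QQ hQQ
    obtain ⟨hQQ', hdown⟩ := Finset.mem_filter.mp hQQ
    obtain ⟨hG, hlast1⟩ := Finset.mem_filter.mp hQQ'
    obtain ⟨⟨hcQ1, hsQ1⟩, ⟨hcQ2, hsQ2⟩, hprQ⟩ := mem_G.mp hG
    have hlast2 : Fin.last n ∈ prY QQ.2 := hprQ ▸ hlast1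
    have hd1 : down QQ.1 = YY.1 := congrArg Prod.fst hdown
    have hd2 : down QQ.2 = YY.2 := congrArg Prod.snd hdown
    obtain ⟨a1, ha1lt, ha1mem, hdec1⟩ := decompose_last QQ.1 hsQ1 hlast1
    obtain ⟨a2, ha2lt, ha2mem, hdec2⟩ := decompose_last QQ.2 hsQ2 hlast2
    have hfil1 : (QQ.1.filter fun p => p.2 ≠ Fin.last n) = YY.1.map (embP n) := by
      rw [← down_map QQ.1 hsQ1.1, hd1]
    have hfil2 : (QQ.2.filter fun p => p.2 ≠ Fin.last n) = YY.2.map (embP n) := by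
      rw [← down_map QQ.2 hsQ2.1, hd2]
    have key : ∀ (Q : Finset (Fin (n+1) × Fin (n+1))) (Y : Finset (Fin n × Fin n))
        (a : Fin (n+1)), struct Q → a < Fin.last n → (a, Fin.last n) ∈ Q →
        (Q.filter fun p => p.2 ≠ Fin.last n) = Y.map (embP n) →
        a ∈ Scompl Y := by
      intro Q Y a hsQ halt hamem hfil
      refine Finset.mem_sdiff.mpr ⟨Finset.mem_univ _, ?_⟩
      intro hmem
      rcases Finset.mem_insert.mp hmem with h' | h'
      · exact absurd h' halt.ne
      · obtain ⟨q, hq, hq1⟩ := Finset.mem_image.mp h'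
        rw [← hfil] at hq
        obtain ⟨hqQ, hq2⟩ := Finset.mem_filter.mp hq
        have : q = (a, Fin.last n) := hsQ.2.1 q hqQ (a, Fin.last n) hamem hq1
        exact hq2 (by rw [this])
    refine ⟨(a1, a2), Finset.mem_product.mpr
      ⟨key QQ.1 YY.1 a1 hsQ1 ha1lt ha1mem hfil1, key QQ.2 YY.2 a2 hsQ2 ha2lt ha2mem hfil2⟩, ?_⟩
    simp only
    rw [← hfil1, ← hfil2, ← hdec1, ← hdec2]

lemma cardB (n k : ℕ) (hkn : k + 1 ≤ n) :
    ((G (n+1) (k+1)).filter fun QQ => Fin.last n ∈ prY QQ.1).card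
      = (k+1)^2 * (G n (k+1)).card := by
  rw [Finset.card_eq_sum_card_fiberwise (f := fun QQ => (down QQ.1, down QQ.2))
    (t := G n (k+1)) ?hmaps]
  · rw [Finset.sum_congr rfl (fun YY hYY => card_fiber n k hkn YY hYY), Finset.sum_const,
      smul_eq_mul, mul_comm]
  case hmaps =>
    intro QQ hQQ
    obtain ⟨hG, hlast1⟩ := Finset.mem_filter.mp hQQ
    obtain ⟨⟨hc1, hs1⟩, ⟨hc2, hs2⟩, hpr⟩ := mem_G.mp hG
    have hlast2 : Fin.last n ∈ prY QQ.2 := hpr ▸ hlast1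
    have hcard : ∀ (Q : Finset (Fin (n+1) × Fin (n+1))), struct Q →
        Q.card = n + 1 - (k+1) → Fin.last n ∈ prY Q → (down Q).card = n - (k+1) := by
      intro Q hsQ hcQ hlQ
      obtain ⟨a, halt, hamem, hdec⟩ := decompose_last Q hsQ hlQ
      have hnotin : (a, Fin.last n) ∉ Q.filter fun p => p.2 ≠ Fin.last n := by
        simp
      have : (Q.filter fun p => p.2 ≠ Fin.last n).card + 1 = n + 1 - (k+1) := by
        rw [← hcQ]
        conv_rhs => rw [hdec]
        rw [Finset.card_insert_of_notMem hnotin]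
      have hdc : (down Q).card = (Q.filter fun p => p.2 ≠ Fin.last n).card := by
        rw [← down_map Q hsQ.1, Finset.card_map]
      omega
    have hstruct : ∀ (Q : Finset (Fin (n+1) × Fin (n+1))), struct Q → struct (down Q) := by
      intro Q hsQ
      rw [← struct_map_iff, down_map Q hsQ.1]
      exact struct_subset (Finset.filter_subset _ _) hsQ
    refine mem_G.mpr ⟨⟨hcard QQ.1 hs1 hc1 hlast1, hstruct QQ.1 hs1⟩,
      ⟨hcard QQ.2 hs2 hc2 hlast2, hstruct QQ.2 hs2⟩, ?_⟩
    apply Finset.map_injective Fin.castSuccEmb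
    rw [← prY_map, ← prY_map, down_map QQ.1 hs1.1, down_map QQ.2 hs2.1,
      prY_filter_ne_last, prY_filter_ne_last, hpr]

lemma cardB_zero (n : ℕ) :
    ((G (n+1) (n+1)).filter fun QQ => Fin.last n ∈ prY QQ.1) = ∅ := by
  rw [Finset.filter_eq_empty_iff]
  intro QQ hQQ
  obtain ⟨⟨hc1, -⟩, -, -⟩ := mem_G.mp hQQ
  have : QQ.1 = ∅ := Finset.card_eq_zero.mp (by rw [hc1]; omega)
  rw [this]
  simp [prY]

lemma U_zero_of_lt : ∀ n k : ℕ, n < k → U n k = 0 := by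
  intro n
  induction n with
  | zero => intro k hk; match k, hk with | k + 1, _ => rfl
  | succ n ih =>
    intro k hk
    match k, hk with
    | k + 1, hk =>
      show U n k + (k + 1) ^ 2 * U n (k + 1) = 0
      rw [ih k (by omega), ih (k+1) (by omega)]
      ring

lemma cardG_zero (n : ℕ) : (G n 0).card = U n 0 := by
  match n with
  | 0 => decide
  | n + 1 =>
    show _ = 0
    rw [Finset.card_eq_zero, Finset.eq_empty_iff_forall_notMem]
    intro QQ hQQ
    obtain ⟨⟨hc1, hs1⟩, -, -⟩ := mem_G.mp hQQ
    have hcard : (prY QQ.1).card = n + 1 := by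
      rw [prY, Finset.card_image_of_injOn (fun p hp q hq h => hs1.2.2 p hp q hq h), hc1]
      omega
    have huniv : prY QQ.1 = Finset.univ := Finset.eq_univ_of_card _ (by
      rw [hcard, Fintype.card_fin])
    have h0 : (0 : Fin (n+1)) ∈ prY QQ.1 := huniv ▸ Finset.mem_univ _
    obtain ⟨p, hp, hp2⟩ := Finset.mem_image.mp h0
    have := hs1.1 p hp
    rw [hp2] at this
    exact absurd this (Fin.not_lt_zero _)

theorem cardG : ∀ n k : ℕ, 1 ≤ k → k ≤ n → (G n k).card = U n k := by
  intro n
  induction n with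
  | zero => intro k h1 h2; omega
  | succ n ih =>
    intro k h1 h2
    match k, h1 with
    | k + 1, _ =>
      have hsplit := Finset.card_filter_add_card_filter_not
        (s := G (n+1) (k+1)) (p := fun QQ => Fin.last n ∈ prY QQ.1)
      have hA : ((G (n+1) (k+1)).filter fun QQ => ¬ Fin.last n ∈ prY QQ.1).card
          = (G n k).card := cardA n k
      show (G (n+1) (k+1)).card = U n k + (k + 1) ^ 2 * U n (k + 1)
      have hAU : (G n k).card = U n k := by
        rcases Nat.eq_zero_or_pos k with rfl | hk
        · exact cardG_zero n
        · exact ih k hk (by omega)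
      rcases Nat.lt_or_ge (k + 1) (n + 1) with hlt | hge
      · have hkn : k + 1 ≤ n := by omega
        have hB := cardB n k hkn
        rw [ih (k+1) (by omega) hkn] at hB
        omega
      · have hkeq : k = n := by omega
        have hB : ((G (n+1) (k+1)).filter fun QQ => Fin.last n ∈ prY QQ.1).card = 0 := by
          subst hkeq
          rw [cardB_zero]
          rfl
        have hU : U n (k + 1) = 0 := U_zero_of_lt n (k+1) (by omega)
        rw [hU]
        omega


/-- The central factorial number `U n k` is the number of ordered pairs `(Q₁, Q₂)` of
supdiagonal `k`-quasi-permutations of `[n]` (simply hooked with `Q⁻ = ∅`) such that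
`pr_y Q₁ = pr_y Q₂`. -/
theorem stmt11 (n k : ℕ) (hk : 1 ≤ k) (hkn : k ≤ n) :
    U n k = Nat.card {QQ : Finset (Fin n × Fin n) × Finset (Fin n × Fin n) //
      IsSHQP n k QQ.1 ∧ IsSHQP n k QQ.2 ∧ Qsub QQ.1 = ∅ ∧ Qsub QQ.2 = ∅ ∧
      prY QQ.1 = prY QQ.2} := by
  rw [natCard_eq_G, cardG n k hk hkn]
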